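/- Suppose λ_α = A_α/Q ∈ ℚ for each α ∈ Γ, with gcd({A_α}, Q) = 1 and Q ≥ 2. Let 0 < δ < 1 and suppose R_i ≥ Q^{1+δ} for all i. Then N_{R⃗}(P) ≥ c · Q^δ for an absolute constant c > 0 (e.g., if N_{R⃗}(P) = 2^t with 2^t < Q/10 then 2^t ≥ min_i R_i / Q ≥ Q^δ). -/
import Mathlib


open Finset

/-- Distance from a real number to the nearest integer. -/
noncomputable def torusNorm (x : ℝ) : ℝ := |x - (round x : ℤ)|

/-- `NProp Γ lam R s` : the defining property of the scale-dependent coefficient norm,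
namely either `s ≥ 1` and there is an integer `1 ≤ Q ≤ 2^s` with
`Σ_α ‖Q λ_α‖_𝕋 · R⃗^α ≤ 2^s`, or `s ≤ 0` and `Σ_α ‖λ_α‖_𝕋 · R⃗^α ≤ 2^s`.
Then `N_{R⃗}(P) = 2^{s₀}` where `s₀` is the least `s` with this property. -/
def NProp {D : ℕ} (Γ : Finset (Fin D → ℕ)) (lam : (Fin D → ℕ) → ℝ)
    (R : Fin D → ℝ) (s : ℤ) : Prop :=
  (1 ≤ s ∧ ∃ Q : ℕ, 1 ≤ Q ∧ (Q : ℝ) ≤ (2 : ℝ) ^ s ∧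
      ∑ α ∈ Γ, torusNorm ((Q : ℝ) * lam α) * ∏ i, R i ^ (α i) ≤ (2 : ℝ) ^ s)
  ∨ (s ≤ 0 ∧ ∑ α ∈ Γ, torusNorm (lam α) * ∏ i, R i ^ (α i) ≤ (2 : ℝ) ^ s)


lemma torus_lb (Q : ℕ) (hQ : 2 ≤ Q) (m : ℤ) (hm : ¬ (Q:ℤ) ∣ m) :
    1 / (Q:ℝ) ≤ torusNorm ((m:ℝ)/(Q:ℝ)) := by
  have hQ0 : (0:ℝ) < Q := by
    have : 0 < Q := by omega
    exact_mod_cast this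
  set r := round ((m:ℝ)/(Q:ℝ)) with hr
  have hne : m - Q*r ≠ 0 := by
    intro h
    exact hm ⟨r, by omega⟩
  have key : (1:ℤ) ≤ |m - Q*r| := Int.one_le_abs hne
  have heq : (m:ℝ)/Q - r = ((m - Q*r : ℤ):ℝ)/Q := by
    push_cast
    field_simp
  unfold torusNorm
  rw [← hr, heq, abs_div, abs_of_pos hQ0]
  have : (1:ℝ) ≤ |((m - Q*r : ℤ):ℝ)| := by
    rw [← Int.cast_abs]
    exact_mod_cast key
  gcongr

lemma dvd_of_all {D : ℕ} (Γ : Finset (Fin D → ℕ)) (A : (Fin D → ℕ) → ℤ)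
    (Q : ℕ) (hgcd : Int.gcd (Γ.gcd A) (Q : ℤ) = 1) (Q₁ : ℤ)
    (h : ∀ α ∈ Γ, (Q:ℤ) ∣ Q₁ * A α) : (Q:ℤ) ∣ Q₁ := by
  have h1 : (Q:ℤ) ∣ Γ.gcd (fun α => Q₁ * A α) := Finset.dvd_gcd h
  rw [Finset.gcd_mul_left] at h1
  have hcop : IsCoprime ((Q:ℤ)) (Γ.gcd A) := by
    rw [Int.isCoprime_iff_gcd_eq_one, Int.gcd_comm]
    exact hgcd
  have h2 : (Q:ℤ) ∣ (normUnit Q₁ : ℤˣ) * Q₁ := hcop.dvd_of_dvd_mul_right (by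
    simpa [normalize_apply, mul_comm, mul_assoc, mul_left_comm] using h1)
  exact Units.dvd_mul_left.mp h2

lemma sum_lb {D : ℕ} (Γ : Finset (Fin D → ℕ))
    (hdeg : ∀ α ∈ Γ, 1 ≤ ∑ i, α i)
    (Q : ℕ) (hQ : 2 ≤ Q) (δ : ℝ) (hδ0 : 0 < δ)
    (R : Fin D → ℝ) (hRQ : ∀ i, (Q : ℝ) ^ ((1 : ℝ) + δ) ≤ R i)
    (f : (Fin D → ℕ) → ℝ) (hf : ∀ α ∈ Γ, 0 ≤ f α)
    (α₀ : Fin D → ℕ) (hα₀ : α₀ ∈ Γ) (hlb : 1/(Q:ℝ) ≤ f α₀) :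
    (Q:ℝ) ^ δ ≤ ∑ α ∈ Γ, f α * ∏ i, R i ^ (α i) := by
  have hQ0 : (0:ℝ) < Q := by
    have : 0 < Q := by omega
    exact_mod_cast this
  have hQ1 : (1:ℝ) ≤ Q := by
    have : 1 ≤ Q := by omega
    exact_mod_cast this
  set B : ℝ := (Q:ℝ) ^ ((1:ℝ) + δ) with hB
  have hB1 : 1 ≤ B := Real.one_le_rpow hQ1 (by linarith)
  have hB0 : 0 ≤ B := by linarith
  have hprod : B ≤ ∏ i, R i ^ (α₀ i) := by
    calc B = B ^ 1 := (pow_one B).symm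
    _ ≤ B ^ (∑ i, α₀ i) := pow_le_pow_right₀ hB1 (hdeg α₀ hα₀)
    _ = ∏ i, B ^ (α₀ i) := (Finset.prod_pow_eq_pow_sum _ _ _).symm
    _ ≤ ∏ i, R i ^ (α₀ i) :=
      Finset.prod_le_prod (fun i _ => pow_nonneg hB0 _)
        (fun i _ => pow_le_pow_left₀ hB0 (hRQ i) _)
  have hBeq : B = Q * (Q:ℝ) ^ δ := by
    rw [hB, Real.rpow_add hQ0, Real.rpow_one]
  have hterm : (Q:ℝ) ^ δ ≤ f α₀ * ∏ i, R i ^ (α₀ i) := by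
    have := mul_le_mul hlb hprod hB0 (hf α₀ hα₀)
    calc (Q:ℝ) ^ δ = 1/(Q:ℝ) * B := by
          rw [hBeq]; field_simp
    _ ≤ f α₀ * ∏ i, R i ^ (α₀ i) := this
  refine le_trans hterm (Finset.single_le_sum (f := fun α => f α * ∏ i, R i ^ (α i)) (fun α hα => ?_) hα₀)
  have hR0 : ∀ i, (0:ℝ) ≤ R i := fun i => le_trans (by linarith [hB1]) (hRQ i)
  exact mul_nonneg (hf α hα) (Finset.prod_nonneg fun i _ => pow_nonneg (hR0 i) _)

/-- Example: if the coefficients are reduced rationals `A_α/Q` with `Q ≥ 2` and all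
scales satisfy `R_i ≥ Q^{1+δ}`, then `N_{R⃗}(P) ≥ (1/10)·Q^δ`. -/
theorem stmt_8 {D : ℕ} (Γ : Finset (Fin D → ℕ)) (hne : Γ.Nonempty)
    (hdeg : ∀ α ∈ Γ, 1 ≤ ∑ i, α i)
    (Q : ℕ) (hQ : 2 ≤ Q) (A : (Fin D → ℕ) → ℤ)
    (hgcd : Int.gcd (Γ.gcd A) (Q : ℤ) = 1)
    (δ : ℝ) (hδ0 : 0 < δ) (hδ1 : δ < 1)
    (R : Fin D → ℝ) (hRQ : ∀ i, (Q : ℝ) ^ ((1 : ℝ) + δ) ≤ R i)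
    (t : ℤ) (ht : IsLeast {s : ℤ | NProp Γ (fun α => (A α : ℝ) / (Q : ℝ)) R s} t) :
    (1 / 10) * (Q : ℝ) ^ δ ≤ (2 : ℝ) ^ t := by
  have hQ1 : (1:ℝ) ≤ Q := by
    have : 1 ≤ Q := by omega
    exact_mod_cast this
  have hQδ0 : (0:ℝ) ≤ (Q:ℝ) ^ δ := Real.rpow_nonneg (by linarith) δ
  have main : (Q:ℝ) ^ δ ≤ (2:ℝ) ^ t := by
    rcases ht.1 with ⟨-, Q₁, hQ₁1, hQ₁le, hsum⟩ | ⟨-, hsum⟩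
    · by_cases hdvd : (Q:ℤ) ∣ (Q₁:ℤ)
      · have hQle : (Q:ℤ) ≤ (Q₁:ℤ) := Int.le_of_dvd (by exact_mod_cast hQ₁1) hdvd
        calc (Q:ℝ) ^ δ ≤ (Q:ℝ) ^ (1:ℝ) :=
              Real.rpow_le_rpow_of_exponent_le hQ1 (by linarith)
        _ = (Q:ℝ) := Real.rpow_one _
        _ ≤ (Q₁:ℝ) := by exact_mod_cast hQle
        _ ≤ (2:ℝ) ^ t := hQ₁le
      · obtain ⟨α₀, hα₀, hα₀nd⟩ : ∃ α₀ ∈ Γ, ¬ (Q:ℤ) ∣ (Q₁:ℤ) * A α₀ := by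
          by_contra h
          push_neg at h
          exact hdvd (dvd_of_all Γ A Q hgcd _ fun α hα => h α hα)
        refine le_trans (sum_lb Γ hdeg Q hQ δ hδ0 R hRQ
          (fun α => torusNorm ((Q₁:ℝ) * ((A α:ℝ) / (Q:ℝ))))
          (fun α _ => abs_nonneg _) α₀ hα₀ ?_) hsum
        have := torus_lb Q hQ ((Q₁:ℤ) * A α₀) hα₀nd
        have heq : (((Q₁:ℤ) * A α₀ : ℤ):ℝ) / (Q:ℝ) = (Q₁:ℝ) * ((A α₀:ℝ) / (Q:ℝ)) := by
          push_cast; ring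
        rwa [heq] at this
    · obtain ⟨α₀, hα₀, hα₀nd⟩ : ∃ α₀ ∈ Γ, ¬ (Q:ℤ) ∣ A α₀ := by
        by_contra h
        push_neg at h
        have : (Q:ℤ) ∣ (1:ℤ) := dvd_of_all Γ A Q hgcd 1
          (fun α hα => by simpa using h α hα)
        have := Int.le_of_dvd one_pos this
        omega
      exact le_trans (sum_lb Γ hdeg Q hQ δ hδ0 R hRQ
        (fun α => torusNorm ((A α:ℝ) / (Q:ℝ)))
        (fun α _ => abs_nonneg _) α₀ hα₀ (torus_lb Q hQ (A α₀) hα₀nd)) hsum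
  linarith
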